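/- arXiv:1712.01599 — 5 statements merged into one kernel-verified Lean document; each statement's English description precedes it below -/
import Mathlib

section
/- For every β > 0 there exists a constant C > 0, depending only on β, such that for every integer s ∈ ℤ, the sum over k ∈ ℤ of 1 / (⟨k⟩^{2β} · (1 + ||k| − |s||)) is at most C. Here ⟨k⟩ = max(|k|, 1). In particular, the bound is uniform in s. -/
/-!
Young's inequality with the conjugate exponents `(1 + β) / β` and `1 + β` bounds each term by
`⟨k⟩ ^ (-(2β + 2)) + ⟨|k| - |s|⟩ ^ (-(1 + β))`. Both exponents exceed `1`, and for a nonnegative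
summable `f : ℤ → ℝ` the series `∑ₖ f (|k| - c)` is at most `2 ∑ f` whatever the shift `c`,
since `f (|k| - c)` is one of `f (k - c)`, `f (-k - c)`.
-/

theorem summable_max_abs_one_rpow_neg {r : ℝ} (hr : 1 < r) :
    Summable fun k : ℤ => max |(k : ℝ)| 1 ^ (-r) := by
  refine (Real.summable_abs_int_rpow hr).of_norm_bounded_eventually ?_
  filter_upwards [Filter.eventually_cofinite_ne 0] with k hk
  have hk1 : (1 : ℝ) ≤ |(k : ℝ)| := by exact_mod_cast Int.one_le_abs hk
  rw [max_eq_left hk1, Real.norm_of_nonneg (by positivity)]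

section AbsShift

variable {f : ℤ → ℝ}

theorem le_comp_sub_add_comp_neg_sub (hf : 0 ≤ f) (c k : ℤ) :
    f (|k| - c) ≤ f (k - c) + f (-k - c) := by
  rcases abs_choice k with hk | hk <;> rw [hk]
  · exact le_add_of_nonneg_right (hf _)
  · exact le_add_of_nonneg_left (hf _)

theorem Summable.comp_abs_sub (hf : Summable f) (hf0 : 0 ≤ f) (c : ℤ) :
    Summable fun k => f (|k| - c) := by
  have h₁ : Summable fun k => f (k - c) := (Equiv.subRight c).summable_iff.mpr hf
  have h₂ : Summable fun k => f (-k - c) :=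
    ((Equiv.neg ℤ).trans (Equiv.subRight c)).summable_iff.mpr hf
  exact (h₁.add h₂).of_nonneg_of_le (fun k => hf0 _) (le_comp_sub_add_comp_neg_sub hf0 c)

theorem tsum_comp_abs_sub_le (hf : Summable f) (hf0 : 0 ≤ f) (c : ℤ) :
    ∑' k, f (|k| - c) ≤ 2 * ∑' j, f j := by
  have h₁ : Summable fun k => f (k - c) := (Equiv.subRight c).summable_iff.mpr hf
  have h₂ : Summable fun k => f (-k - c) :=
    ((Equiv.neg ℤ).trans (Equiv.subRight c)).summable_iff.mpr hf
  calc ∑' k, f (|k| - c) ≤ ∑' k, (f (k - c) + f (-k - c)) :=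
        (hf.comp_abs_sub hf0 c).tsum_le_tsum (le_comp_sub_add_comp_neg_sub hf0 c) (h₁.add h₂)
    _ = ∑' k, f (k - c) + ∑' k, f (-k - c) := h₁.tsum_add h₂
    _ = ∑' j, f j + ∑' j, f j := by
        congr 1
        · exact (Equiv.subRight c).tsum_eq f
        · exact ((Equiv.neg ℤ).trans (Equiv.subRight c)).tsum_eq f
    _ = 2 * ∑' j, f j := (two_mul _).symm

end AbsShift

theorem one_div_rpow_mul_le {x y β : ℝ} (hx : 0 < x) (hy : 0 < y) (hβ : 0 < β) :
    1 / (x ^ (2 * β) * y) ≤ x ^ (-(2 * β + 2)) + y ^ (-(1 + β)) := by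
  have hpq : ((1 + β) / β).HolderConjugate (1 + β) := by
    have := Real.HolderConjugate.inv_inv (a := β / (1 + β)) (b := 1 / (1 + β))
      (by positivity) (by positivity) (by field_simp; ring)
    simpa using this
  have young := Real.young_inequality_of_nonneg (Real.rpow_nonneg hx.le (-(2 * β)))
    (inv_nonneg.mpr hy.le) hpq
  have hp1 : 1 ≤ (1 + β) / β := by rw [le_div_iff₀ hβ]; linarith
  have hq1 : 1 ≤ 1 + β := by linarith
  calc 1 / (x ^ (2 * β) * y) = x ^ (-(2 * β)) * y⁻¹ := by
        rw [Real.rpow_neg hx.le, one_div, mul_inv]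
    _ ≤ (x ^ (-(2 * β))) ^ ((1 + β) / β) / ((1 + β) / β) + y⁻¹ ^ (1 + β) / (1 + β) := young
    _ ≤ (x ^ (-(2 * β))) ^ ((1 + β) / β) + y⁻¹ ^ (1 + β) := by
        gcongr
        · exact div_le_self (by positivity) hp1
        · exact div_le_self (by positivity) hq1
    _ = x ^ (-(2 * β + 2)) + y ^ (-(1 + β)) := by
        rw [← Real.rpow_mul hx.le, Real.inv_rpow hy.le, ← Real.rpow_neg hy.le]
        congr 2
        field_simp
        ring

/-- Lemma A.2: for every `β > 0` there is `C > 0` depending only on `β` such that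
for every `s ∈ ℤ`, `∑_{k ∈ ℤ} 1/(⟨k⟩^{2β} (1 + ||k| - |s||)) ≤ C`, where `⟨k⟩ = max(|k|,1)`. -/
theorem stmt_4 (β : ℝ) (hβ : 0 < β) :
    ∃ C > 0, ∀ s : ℤ,
      (∑' k : ℤ,
          1 / ((max |(k : ℝ)| 1) ^ (2 * β) * (1 + |(|(k : ℝ)| - |(s : ℝ)|)|))) ≤ C := by
  set g : ℝ → ℤ → ℝ := fun r k => max |(k : ℝ)| 1 ^ (-r)
  have hg0 (r : ℝ) : 0 ≤ g r := fun k => by positivity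
  have hA := summable_max_abs_one_rpow_neg (r := 2 * β + 2) (by linarith)
  have hB := summable_max_abs_one_rpow_neg (r := 1 + β) (by linarith)
  have hA_pos : 0 < ∑' k, g (2 * β + 2) k := hA.tsum_pos (hg0 _) 0 (by positivity)
  have hB_nonneg : 0 ≤ ∑' j, g (1 + β) j := tsum_nonneg (hg0 _)
  refine ⟨∑' k, g (2 * β + 2) k + 2 * ∑' j, g (1 + β) j, by positivity, fun s => ?_⟩
  have bound (k : ℤ) : 1 / ((max |(k : ℝ)| 1) ^ (2 * β) * (1 + |(|(k : ℝ)| - |(s : ℝ)|)|)) ≤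
      g (2 * β + 2) k + g (1 + β) (|k| - |s|) := by
    refine (one_div_rpow_mul_le (by positivity) (by positivity) hβ).trans (add_le_add le_rfl ?_)
    refine Real.rpow_le_rpow_of_nonpos (by positivity) ?_ (by linarith)
    push_cast
    exact max_le (by linarith) (by linarith [abs_nonneg (|(k : ℝ)| - |(s : ℝ)|)])
  have hrhs := hA.add (hB.comp_abs_sub (hg0 _) |s|)
  calc _ ≤ ∑' k, (g (2 * β + 2) k + g (1 + β) (|k| - |s|)) :=
        hrhs.of_nonneg_of_le (fun k => by positivity) bound |>.tsum_le_tsum bound hrhs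
    _ = ∑' k, g (2 * β + 2) k + ∑' k, g (1 + β) (|k| - |s|) :=
        hA.tsum_add (hB.comp_abs_sub (hg0 _) |s|)
    _ ≤ _ := by gcongr; exact tsum_comp_abs_sub_le hB (hg0 _) |s|
end

section
/- For every β > 0 there exists C > 0 depending only on β such that for every s ∈ ℤ, ∑_{k ∈ ℤ} ⟨s⟩ / (⟨k⟩^{2β+1} · (1 + ||k| − |s||)) ≤ C, where ⟨k⟩ = max(|k|,1). -/
/-!
With `p = 2β + 1 > 1`, `K = ⟨k⟩`, `S = ⟨s⟩` and `d = ||k| - |s||` we have `S ≤ K + d`, and then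
`S / (K^p (1 + d)) ≤ 2 / K^p + 2 / (1 + d)^p`: either `S ≤ 2(1 + d)`, or `k` is so large that
`S ≤ 2K` and `1 + d ≤ K`. Both terms are bounded by the summable weight `⟨x⟩^{-p}`, evaluated at
`k` and at `|k| - |s| = ±k - |s|`, and translating `k` by `±|s|` does not change the sum over `ℤ`.
-/

open Real

theorem summable_max_abs_one_rpow_inv {p : ℝ} (hp : 1 < p) :
    Summable fun k : ℤ => (max |(k : ℝ)| 1 ^ p)⁻¹ := by
  refine (summable_abs_int_rpow hp).of_norm_bounded_eventually ?_
  filter_upwards [Set.Finite.compl_mem_cofinite (Set.finite_singleton (0 : ℤ))] with k hk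
  have hk1 : 1 ≤ |(k : ℝ)| := by exact_mod_cast Int.one_le_abs (by simpa using hk)
  rw [max_eq_left hk1, Real.norm_of_nonneg (by positivity), rpow_neg (abs_nonneg _)]

theorem Function.Even.comp_abs_sub_le {g : ℝ → ℝ} (hg : Function.Even g) (hg0 : ∀ y, 0 ≤ g y)
    (x n : ℝ) : g (|x| - n) ≤ g (x - n) + g (x + n) := by
  rcases le_or_gt 0 x with hx | hx
  · rw [abs_of_nonneg hx]
    linarith [hg0 (x + n)]
  · rw [abs_of_neg hx, show -x - n = -(x + n) by ring, hg]
    linarith [hg0 (x - n)]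

theorem div_rpow_mul_one_add_le {p K S d : ℝ} (hp : 1 ≤ p) (hK : 0 < K) (hd : 0 ≤ d)
    (hS : S ≤ K + d) : S / (K ^ p * (1 + d)) ≤ 2 / K ^ p + 2 / (1 + d) ^ p := by
  have hd1 : 0 < 1 + d := by linarith
  rcases le_or_gt S (2 * (1 + d)) with hS2 | hS2
  · calc S / (K ^ p * (1 + d)) ≤ 2 * (1 + d) / (K ^ p * (1 + d)) := by gcongr
      _ = 2 / K ^ p := by field_simp
      _ ≤ 2 / K ^ p + 2 / (1 + d) ^ p := le_add_of_nonneg_right (by positivity)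
  · have hSK : S ≤ 2 * K := by linarith
    have hdK : 1 + d ≤ K := by linarith
    calc S / (K ^ p * (1 + d)) = S / (K * K ^ (p - 1) * (1 + d)) := by
          rw [← rpow_one_add' hK.le (by linarith), add_sub_cancel]
      _ ≤ 2 * K / (K * (1 + d) ^ (p - 1) * (1 + d)) := by gcongr
      _ = 2 / (1 + d) ^ p := by
          rw [mul_assoc, ← rpow_add_one hd1.ne', sub_add_cancel]
          field_simp
      _ ≤ 2 / K ^ p + 2 / (1 + d) ^ p := le_add_of_nonneg_left (by positivity)

theorem hasSum_int_comp_add {g : ℝ → ℝ} (hg : Summable fun k : ℤ => g k) (n : ℤ) :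
    HasSum (fun k : ℤ => g (k + n)) (∑' k : ℤ, g k) := by
  simpa [Function.comp_def] using (Equiv.addRight n).hasSum_iff.2 hg.hasSum

theorem div_rpow_mul_one_add_abs_sub_le {p : ℝ} (hp : 1 ≤ p) (k s : ℝ) :
    max |s| 1 / (max |k| 1 ^ p * (1 + |(|k| - |s|)|)) ≤
      2 * (max |k| 1 ^ p)⁻¹ + 2 * (max |(|k| - |s|)| 1 ^ p)⁻¹ := by
  have hS : max |s| 1 ≤ max |k| 1 + |(|k| - |s|)| := by
    rcases le_total |s| 1 with h | h
    · rw [max_eq_right h]; linarith [le_max_right |k| 1, abs_nonneg (|k| - |s|)]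
    · rw [max_eq_left h]; linarith [le_max_left |k| 1, neg_abs_le (|k| - |s|)]
  refine (div_rpow_mul_one_add_le hp (by positivity) (abs_nonneg _) hS).trans ?_
  simp only [div_eq_mul_inv]
  gcongr
  exact max_le (by linarith) (by linarith [abs_nonneg (|k| - |s|)])

theorem exists_tsum_max_abs_one_div_rpow_le {p : ℝ} (hp : 1 < p) :
    ∃ C > 0, ∀ s : ℤ,
      (∑' k : ℤ, (max |(s : ℝ)| 1) /
          ((max |(k : ℝ)| 1) ^ p * (1 + |(|(k : ℝ)| - |(s : ℝ)|)|))) ≤ C := by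
  set g : ℝ → ℝ := fun x => (max |x| 1 ^ p)⁻¹
  have hg0 : ∀ x, 0 ≤ g x := fun x => by positivity
  have hg : Summable fun k : ℤ => g k := summable_max_abs_one_rpow_inv hp
  have hT : 0 < ∑' k : ℤ, g k := hg.tsum_pos (fun k => hg0 k) 0 (by simp [g])
  refine ⟨6 * ∑' k : ℤ, g k, by positivity, fun s => ?_⟩
  have hsub := hasSum_int_comp_add hg (-|s|)
  have hadd := hasSum_int_comp_add hg |s|
  push_cast [← sub_eq_add_neg] at hsub hadd
  have hbound := (hg.hasSum.mul_left 2).add ((hsub.add hadd).mul_left 2)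
  have hle : ∀ k : ℤ, (max |(s : ℝ)| 1) /
      ((max |(k : ℝ)| 1) ^ p * (1 + |(|(k : ℝ)| - |(s : ℝ)|)|)) ≤
        2 * g k + 2 * (g (k - |(s : ℝ)|) + g (k + |(s : ℝ)|)) := fun k =>
    (div_rpow_mul_one_add_abs_sub_le hp.le k s).trans <| by
      gcongr
      exact Function.Even.comp_abs_sub_le (fun x => by simp [g]) hg0 k |s|
  calc _ ≤ 2 * ∑' k : ℤ, g k + 2 * (∑' k : ℤ, g k + ∑' k : ℤ, g k) :=
        hasSum_le hle (hbound.summable.of_nonneg_of_le (fun k => by positivity) hle).hasSum hbound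
  _ = _ := by ring

/-- For every `β > 0` there is `C > 0` depending only on `β` such that for every `s ∈ ℤ`,
`∑_{k ∈ ℤ} ⟨s⟩ / (⟨k⟩^{2β+1} (1 + ||k| - |s||)) ≤ C`, where `⟨k⟩ = max(|k|,1)`. -/
theorem stmt_5 (β : ℝ) (hβ : 0 < β) :
    ∃ C > 0, ∀ s : ℤ,
      (∑' k : ℤ, (max |(s : ℝ)| 1) /
          ((max |(k : ℝ)| 1) ^ (2 * β + 1) * (1 + |(|(k : ℝ)| - |(s : ℝ)|)|))) ≤ C :=
  exists_tsum_max_abs_one_div_rpow_le (by linarith)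
end

section
/- Let β > 0 and let A, B : ℤ × ℤ → M₂(ℂ) be infinite matrices of 2×2 blocks with |A|_{β+} := sup_{s,s'} (1 + ||s|−|s'||)⟨s⟩^β⟨s'⟩^β ‖A_s^{s'}‖_∞ < ∞ and |B|_β := sup_{s,s'} ⟨s⟩^β⟨s'⟩^β ‖B_s^{s'}‖_∞ < ∞. Then the product AB (with (AB)_s^{s'} = ∑_{k∈ℤ} A_s^k B_k^{s'}) satisfies |AB|_β ≤ C |A|_{β+} |B|_β for a constant C depending only on β. -/
/-!
Up to the factor 2 lost in submultiplicativity of the entrywise norm, the `k`-th term of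
`(AB)_s^{s'}`, weighted by `⟨s⟩^β ⟨s'⟩^β`, is at most
`|A|_{β+} |B|_β / ((1 + ||s| - |k||) ⟨k⟩^{2β})`. This denominator is at least
`min(1 + ||s| - |k||, ⟨k⟩)^{1+2β}`, and `||s| - |k||` is `|k - s|` or `|k + s|`, so the terms are
dominated by three translates of the summable sequence `⟨k⟩^{-(1+2β)}`, whose sums do not
depend on `s`.
-/

open Real

/-- Entrywise sup norm on `2×2` complex matrices. -/
noncomputable def mnorm (M : Matrix (Fin 2) (Fin 2) ℂ) : ℝ :=
  ⨆ i : Fin 2, ⨆ j : Fin 2, ‖M i j‖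

lemma norm_entry_le_mnorm (M : Matrix (Fin 2) (Fin 2) ℂ) (i j : Fin 2) : ‖M i j‖ ≤ mnorm M :=
  (le_ciSup (Set.finite_range _).bddAbove j).trans
    (le_ciSup (f := fun i => ⨆ j, ‖M i j‖) (Set.finite_range _).bddAbove i)

lemma mnorm_nonneg (M : Matrix (Fin 2) (Fin 2) ℂ) : 0 ≤ mnorm M :=
  (norm_nonneg _).trans (norm_entry_le_mnorm M 0 0)

lemma mnorm_mul_le (M N : Matrix (Fin 2) (Fin 2) ℂ) :
    mnorm (M * N) ≤ 2 * mnorm M * mnorm N := by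
  refine ciSup_le fun i => ciSup_le fun j => ?_
  have hM := norm_entry_le_mnorm M
  have hN := norm_entry_le_mnorm N
  calc ‖(M * N) i j‖ = ‖M i 0 * N 0 j + M i 1 * N 1 j‖ := by
        simp [Matrix.mul_apply, Fin.sum_univ_two]
    _ ≤ ‖M i 0‖ * ‖N 0 j‖ + ‖M i 1‖ * ‖N 1 j‖ := (norm_add_le _ _).trans_eq (by simp)
    _ ≤ mnorm M * mnorm N + mnorm M * mnorm N := by
        gcongr <;> first | exact hM _ _ | exact hN _ _ | exact mnorm_nonneg M
    _ = 2 * mnorm M * mnorm N := by ring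

section EntrywiseNorm

open scoped Matrix.Norms.Elementwise

lemma mnorm_eq_norm (M : Matrix (Fin 2) (Fin 2) ℂ) : mnorm M = ‖M‖ :=
  le_antisymm (ciSup_le fun _ => ciSup_le fun _ => M.norm_entry_le_entrywise_sup_norm)
    ((Matrix.norm_le_iff (mnorm_nonneg M)).2 (norm_entry_le_mnorm M))

lemma summable_and_mul_mnorm_tsum_le {ι : Type*} {f : ι → Matrix (Fin 2) (Fin 2) ℂ}
    {g : ι → ℝ} {w a : ℝ} (hw : 0 < w) (hg : HasSum g a) (hfg : ∀ i, w * mnorm (f i) ≤ g i) :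
    Summable f ∧ w * mnorm (∑' i, f i) ≤ a := by
  have hfg' : ∀ i, ‖f i‖ ≤ g i / w := fun i => by
    rw [← mnorm_eq_norm, le_div_iff₀ hw, mul_comm]
    exact hfg i
  refine ⟨.of_norm_bounded (hg.summable.div_const w) hfg', ?_⟩
  rw [mnorm_eq_norm, ← le_div_iff₀' hw]
  exact tsum_of_norm_bounded (hg.div_const w) hfg'

end EntrywiseNorm

lemma inv_mul_rpow_le_rpow_neg_add_rpow_neg {x y γ : ℝ} (hx : 0 < x) (hy : 0 < y) (hγ : 0 ≤ γ) :
    (x * y ^ γ)⁻¹ ≤ x ^ (-(1 + γ)) + y ^ (-(1 + γ)) := by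
  rcases le_total x y with hxy | hyx
  · calc (x * y ^ γ)⁻¹ ≤ (x * x ^ γ)⁻¹ := by gcongr
      _ = x ^ (-(1 + γ)) := by rw [rpow_neg hx.le, rpow_add hx, rpow_one]
      _ ≤ _ := le_add_of_nonneg_right (by positivity)
  · calc (x * y ^ γ)⁻¹ ≤ (y * y ^ γ)⁻¹ := by gcongr
      _ = y ^ (-(1 + γ)) := by rw [rpow_neg hy.le, rpow_add hy, rpow_one]
      _ ≤ _ := le_add_of_nonneg_left (by positivity)

lemma one_add_abs_abs_sub_abs_rpow_le {x y α : ℝ} (hα : 0 ≤ α) :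
    (1 + |(|x| - |y|)|) ^ (-α) ≤ (max |y - x| 1) ^ (-α) + (max |y + x| 1) ^ (-α) := by
  have key : ∀ z, |(|x| - |y|)| = |z| → (1 + |(|x| - |y|)|) ^ (-α) ≤ (max |z| 1) ^ (-α) :=
    fun z hz => rpow_le_rpow_of_nonpos (by positivity)
      (max_le (by linarith [abs_nonneg z]) (by linarith [abs_nonneg (|x| - |y|)]))
      (neg_nonpos.2 hα)
  have hsub : |(|x| - |y|)| = |y - x| ∨ |(|x| - |y|)| = |y + x| := by
    rcases abs_cases x with ⟨hx, _⟩ | ⟨hx, _⟩ <;> rcases abs_cases y with ⟨hy, _⟩ | ⟨hy, _⟩ <;>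
      rw [hx, hy]
    · exact .inl (abs_sub_comm _ _)
    · exact .inr (by rw [sub_neg_eq_add, add_comm])
    · exact .inr (by rw [← neg_add', abs_neg, add_comm])
    · exact .inl (by rw [neg_sub_neg])
  rcases hsub with h | h
  · exact (key _ h).trans (le_add_of_nonneg_right (by positivity))
  · exact (key _ h).trans (le_add_of_nonneg_left (by positivity))

lemma summable_max_abs_int_rpow_neg {α : ℝ} (hα : 1 < α) :
    Summable fun k : ℤ => (max |(k : ℝ)| 1) ^ (-α) := by
  refine (summable_abs_int_rpow hα).congr_cofinite ?_
  filter_upwards [Filter.eventually_cofinite_ne 0] with k hk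
  rw [max_eq_left]
  exact_mod_cast Int.one_le_abs hk

lemma mul_mnorm_mul_le {P Q : Matrix (Fin 2) (Fin 2) ℂ} {a b c d p q : ℝ} (ha : 0 ≤ a)
    (hb : 0 < b) (hc : 0 ≤ c) (hd : 0 < d) (hP : d * a * b * mnorm P ≤ p)
    (hQ : b * c * mnorm Q ≤ q) :
    a * c * mnorm (P * Q) ≤ 2 * p * q * (d * (b * b))⁻¹ := by
  rw [← div_eq_mul_inv, le_div_iff₀ (by positivity)]
  calc a * c * mnorm (P * Q) * (d * (b * b))
      ≤ a * c * (2 * mnorm P * mnorm Q) * (d * (b * b)) := by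
        gcongr
        exact mnorm_mul_le P Q
    _ = 2 * (d * a * b * mnorm P) * (b * c * mnorm Q) := by ring
    _ ≤ 2 * p * q := by
        have hP₀ : 0 ≤ d * a * b * mnorm P := mul_nonneg (by positivity) (mnorm_nonneg P)
        have hQ₀ : 0 ≤ b * c * mnorm Q := mul_nonneg (by positivity) (mnorm_nonneg Q)
        exact mul_le_mul (mul_le_mul_of_nonneg_left hP zero_le_two) hQ hQ₀ (by linarith)

lemma inv_one_add_abs_abs_sub_abs_mul_rpow_le {x y β : ℝ} (hβ : 0 ≤ β) :
    ((1 + |(|x| - |y|)|) * ((max |y| 1) ^ β * (max |y| 1) ^ β))⁻¹ ≤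
      (max |y - x| 1) ^ (-(1 + 2 * β)) + (max |y + x| 1) ^ (-(1 + 2 * β)) +
        (max |y| 1) ^ (-(1 + 2 * β)) := by
  have hy : 0 < max |y| 1 := lt_max_of_lt_right one_pos
  rw [← rpow_add hy, ← two_mul]
  exact (inv_mul_rpow_le_rpow_neg_add_rpow_neg (by positivity) hy (by positivity)).trans
    (add_le_add_left (one_add_abs_abs_sub_abs_rpow_le (by positivity)) _)

/-- Lemma 3.1(1): if `|A|_{β+} ≤ nA` and `|B|_β ≤ nB` (weighted sup norms of the
`2×2` blocks), then the block product `AB` converges and `|AB|_β ≤ C nA nB`,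
with `C` depending only on `β`. -/
theorem stmt_6 (β : ℝ) (hβ : 0 < β) :
    ∃ C > 0, ∀ (A B : ℤ → ℤ → Matrix (Fin 2) (Fin 2) ℂ) (nA nB : ℝ),
      (∀ s s' : ℤ,
        (1 + |(|(s : ℝ)| - |(s' : ℝ)|)|) * (max |(s : ℝ)| 1) ^ β * (max |(s' : ℝ)| 1) ^ β *
            mnorm (A s s') ≤ nA) →
      (∀ s s' : ℤ,
        (max |(s : ℝ)| 1) ^ β * (max |(s' : ℝ)| 1) ^ β * mnorm (B s s') ≤ nB) →
      ∀ s s' : ℤ,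
        Summable (fun k : ℤ => A s k * B k s') ∧
        (max |(s : ℝ)| 1) ^ β * (max |(s' : ℝ)| 1) ^ β *
            mnorm (∑' k : ℤ, A s k * B k s') ≤ C * nA * nB := by
  set g : ℤ → ℝ := fun k => (max |(k : ℝ)| 1) ^ (-(1 + 2 * β))
  have hg : Summable g := summable_max_abs_int_rpow_neg (by linarith)
  have hS : 0 < ∑' k, g k := hg.tsum_pos (fun _ => by positivity) 0 (by simp [g])
  refine ⟨6 * ∑' k, g k, by positivity, fun A B nA nB hA hB s s' => ?_⟩
  have hnA : 0 ≤ nA := (mul_nonneg (by positivity) (mnorm_nonneg _)).trans (hA 0 0)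
  have hnB : 0 ≤ nB := (mul_nonneg (by positivity) (mnorm_nonneg _)).trans (hB 0 0)
  have hterm : ∀ k, (max |(s : ℝ)| 1) ^ β * (max |(s' : ℝ)| 1) ^ β * mnorm (A s k * B k s') ≤
      2 * nA * nB * (g (k - s) + g (k + s) + g k) := fun k => by
    refine (mul_mnorm_mul_le (by positivity) (by positivity) (by positivity) (by positivity)
      (hA s k) (hB k s')).trans ?_
    gcongr
    simpa only [g, Int.cast_sub, Int.cast_add] using
      inv_one_add_abs_abs_sub_abs_mul_rpow_le (x := s) (y := k) hβ.le
  have hsum : HasSum (fun k => 2 * nA * nB * (g (k - s) + g (k + s) + g k))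
      (2 * nA * nB * (∑' k, g k + ∑' k, g k + ∑' k, g k)) :=
    ((((Equiv.subRight s).hasSum_iff.2 hg.hasSum).add
      ((Equiv.addRight s).hasSum_iff.2 hg.hasSum)).add hg.hasSum).mul_left _
  obtain ⟨hsummable, hle⟩ := summable_and_mul_mnorm_tsum_le (by positivity) hsum hterm
  exact ⟨hsummable, hle.trans_eq (by ring)⟩
end

section
/- Let 0 < σ' < σ ≤ 1, κ > 0, n ≥ 1, and let ω ∈ ℝ^n satisfy |k·ω| ≥ κ for all k ∈ ℤ^n with 0 < |k| ≤ N. Let ψ : 𝕋^n_σ → ℂ be holomorphic and bounded with zero mean (ψ̂(0) = 0), and define φ(θ) = ∑_{0<|k|≤N} (−i ψ̂(k)/(k·ω)) e^{ik·θ}. Then sup_{|Im θ|<σ'} |φ(θ)| ≤ C / (κ (σ−σ')^n) · sup_{|Im θ|<σ} |ψ(θ)|, with C depending only on n. -/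
open MeasureTheory Finset

/-- The `k`-th Fourier coefficient of a `2π`-periodic function, computed over `[0,2π]^n`. -/
noncomputable def fourierCoeff' (n : ℕ) (ψ : (Fin n → ℂ) → ℂ) (k : Fin n → ℤ) : ℂ :=
  (((2 * Real.pi) ^ n : ℝ))⁻¹ •
    ∫ θ : Fin n → ℝ in Set.univ.pi fun _ : Fin n => Set.Icc (0 : ℝ) (2 * Real.pi),
      ψ (fun i => (θ i : ℂ)) * Complex.exp (-Complex.I * ∑ i, (k i : ℂ) * (θ i : ℂ))

/-!
Shifting the contour of the integral defining `ψ̂(k)` to `Im θᵢ = -s · sign kᵢ` is allowed by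
holomorphy and `2π`-periodicity in each variable, and gives the Cauchy estimate
`|ψ̂(k)| ≤ M e^{-s|k|}` for every `0 ≤ s < σ`. With `s = (σ + σ')/2` and `|e^{ik·θ}| ≤ e^{σ'|k|}`
on the narrower strip, each term of `φ` is at most `M κ⁻¹ e^{-δ|k|}` with `δ = (σ - σ')/2`, and
`∑_{k ∈ ℤⁿ} e^{-δ|k|} = (∑_{m ∈ ℤ} e^{-δ|m|})ⁿ ≤ (1 + 2/δ)ⁿ ≤ (3/δ)ⁿ`.
-/

open Complex

section CubeFubini
variable {F : Type*} [NormedAddCommGroup F] {n : ℕ} {a b : ℝ}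

theorem preimage_piFinSuccAbove_symm_Icc :
    (MeasurableEquiv.piFinSuccAbove (fun _ : Fin (n + 1) => ℝ) 0).symm ⁻¹'
      Set.Icc (fun _ => a) (fun _ => b) = Set.Icc a b ×ˢ Set.Icc (fun _ => a) (fun _ => b) :=
  ((Fin.insertNthOrderIso (fun _ => ℝ) 0).preimage_Icc _ _).trans (Set.Icc_prod_eq _ _)

theorem MeasureTheory.IntegrableOn.comp_finCons {f : (Fin (n + 1) → ℝ) → F}
    (hf : IntegrableOn f (Set.Icc (fun _ => a) (fun _ => b))) :
    IntegrableOn (fun p : ℝ × (Fin n → ℝ) => f (Fin.cons p.1 p.2))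
      (Set.Icc a b ×ˢ Set.Icc (fun _ => a) (fun _ => b)) (volume.prod volume) := by
  rw [← (volume_preserving_piFinSuccAbove (fun _ : Fin (n + 1) => ℝ) 0).symm
    |>.integrableOn_comp_preimage (MeasurableEquiv.measurableEmbedding _),
    preimage_piFinSuccAbove_symm_Icc, Measure.volume_eq_prod] at hf
  simpa only [Function.comp_def, MeasurableEquiv.piFinSuccAbove_symm_apply, Fin.insertNthEquiv,
    Equiv.coe_fn_mk, Fin.insertNth_zero'] using hf

variable [NormedSpace ℝ F]

theorem setIntegral_Icc_pi_succ_eq_setIntegral_prod (f : (Fin (n + 1) → ℝ) → F) :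
    ∫ θ in Set.Icc (fun _ => a) (fun _ => b), f θ =
      ∫ p in Set.Icc a b ×ˢ Set.Icc (fun _ => a) (fun _ => b), f (Fin.cons p.1 p.2)
        ∂volume.prod volume := by
  rw [← (volume_preserving_piFinSuccAbove (fun _ : Fin (n + 1) => ℝ) 0).symm
    |>.setIntegral_preimage_emb (MeasurableEquiv.measurableEmbedding _),
    preimage_piFinSuccAbove_symm_Icc, ← Measure.volume_eq_prod]
  simp [MeasurableEquiv.piFinSuccAbove_symm_apply, Fin.insertNthEquiv]

theorem setIntegral_Icc_pi_succ {f : (Fin (n + 1) → ℝ) → F}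
    (hf : IntegrableOn f (Set.Icc (fun _ => a) (fun _ => b))) :
    ∫ θ in Set.Icc (fun _ => a) (fun _ => b), f θ =
      ∫ x in Set.Icc a b, ∫ y in Set.Icc (fun _ => a) (fun _ => b), f (Fin.cons x y) := by
  rw [setIntegral_Icc_pi_succ_eq_setIntegral_prod, setIntegral_prod _ hf.comp_finCons]

theorem setIntegral_Icc_pi_succ' {f : (Fin (n + 1) → ℝ) → F}
    (hf : IntegrableOn f (Set.Icc (fun _ => a) (fun _ => b))) :
    ∫ θ in Set.Icc (fun _ => a) (fun _ => b), f θ =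
      ∫ y in Set.Icc (fun _ => a) (fun _ => b), ∫ x in Set.Icc a b, f (Fin.cons x y) := by
  rw [setIntegral_Icc_pi_succ hf, integral_integral_swap]
  rw [Measure.prod_restrict]
  exact hf.comp_finCons

end CubeFubini

theorem intervalIntegral_comp_add_mul_I_of_periodic {E : Type*} [NormedAddCommGroup E]
    [NormedSpace ℂ E] {f : ℂ → E} {σ c : ℝ}
    (hf : DifferentiableOn ℂ f {z | |z.im| < σ}) (hper : ∀ z, f (z + 2 * Real.pi) = f z)
    (hc : |c| < σ) :
    ∫ x in (0 : ℝ)..2 * Real.pi, f (x + c * I) = ∫ x in (0 : ℝ)..2 * Real.pi, f x := by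
  have hrect := integral_boundary_rect_eq_zero_of_differentiableOn f 0 ⟨2 * Real.pi, c⟩ <|
    hf.mono fun z ⟨_, hz⟩ => by
      simpa using (Set.abs_sub_left_of_mem_uIcc hz).trans_lt (by simpa using hc)
  have hsides : ∫ y in (0 : ℝ)..c, f (2 * Real.pi + y * I) = ∫ y in (0 : ℝ)..c, f (y * I) := by
    simp_rw [add_comm (2 * Real.pi : ℂ), hper]
  simp only [zero_re, zero_im, ofReal_zero, zero_mul, add_zero, zero_add] at hrect
  push_cast at hrect
  rw [hsides] at hrect
  linear_combination (norm := module) -hrect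

/-- The strip `𝕋ⁿ_σ`, lifted to `ℂⁿ`. -/
def polystrip (n : ℕ) (σ : ℝ) : Set (Fin n → ℂ) := {z | ∀ i, |(z i).im| < σ}

variable {n : ℕ}

def IsTorusPeriodic {E : Type*} (g : (Fin n → ℂ) → E) : Prop :=
  ∀ (z : Fin n → ℂ) (k : Fin n → ℤ), g (fun i => z i + 2 * Real.pi * (k i : ℂ)) = g z

theorem finCons_add_two_pi_mul (z : ℂ) (w : Fin n → ℂ) (m : ℤ) (k : Fin n → ℤ) :
    (fun i => (Fin.cons z w : Fin (n + 1) → ℂ) i +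
        2 * Real.pi * ((Fin.cons m k : Fin (n + 1) → ℤ) i : ℂ)) =
      Fin.cons (z + 2 * Real.pi * m) fun i => w i + 2 * Real.pi * (k i : ℂ) := by
  funext i
  cases i using Fin.cases <;> simp

theorem ofReal_finCons_add_mul_I (x c : ℝ) (y η : Fin n → ℝ) :
    (fun i => ((Fin.cons x y : Fin (n + 1) → ℝ) i : ℂ) + (Fin.cons c η : Fin (n + 1) → ℝ) i * I) =
      Fin.cons (x + c * I) fun i => (y i : ℂ) + η i * I := by
  funext i
  cases i using Fin.cases <;> simp

theorem ofReal_finCons (x : ℝ) (y : Fin n → ℝ) :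
    (fun i => ((Fin.cons x y : Fin (n + 1) → ℝ) i : ℂ)) = Fin.cons (x : ℂ) fun i => (y i : ℂ) := by
  funext i
  cases i using Fin.cases <;> simp

theorem mem_polystrip_ofReal_add_mul_I {σ : ℝ} {η : Fin n → ℝ} (hη : ∀ i, |η i| < σ)
    (θ : Fin n → ℝ) : (fun i => (θ i : ℂ) + η i * I) ∈ polystrip n σ := fun i => by
  simpa using hη i

theorem finCons_mem_polystrip {σ : ℝ} {z : ℂ} {w : Fin n → ℂ} (hz : |z.im| < σ)
    (hw : w ∈ polystrip n σ) : (Fin.cons z w : Fin (n + 1) → ℂ) ∈ polystrip (n + 1) σ := by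
  intro i
  cases i using Fin.cases
  · simpa using hz
  · simpa using hw _

theorem IsTorusPeriodic.finCons_add_two_pi {E : Type*} {g : (Fin (n + 1) → ℂ) → E}
    (hg : IsTorusPeriodic g) (z : ℂ) (w : Fin n → ℂ) :
    g (Fin.cons (z + 2 * Real.pi) w) = g (Fin.cons z w) := by
  simpa [finCons_add_two_pi_mul] using hg (Fin.cons z w) (Fin.cons 1 0)

theorem IsTorusPeriodic.comp_finCons {E : Type*} {g : (Fin (n + 1) → ℂ) → E}
    (hg : IsTorusPeriodic g) (z : ℂ) :
    IsTorusPeriodic fun w : Fin n → ℂ => g (Fin.cons z w) := fun w k => by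
  simpa [finCons_add_two_pi_mul] using hg (Fin.cons z w) (Fin.cons 0 k)

section ContourShift

variable {E : Type*} [NormedAddCommGroup E] [NormedSpace ℂ E]

theorem DifferentiableOn.comp_finCons_left {σ : ℝ} {g : (Fin (n + 1) → ℂ) → E}
    (hg : DifferentiableOn ℂ g (polystrip (n + 1) σ)) {w : Fin n → ℂ} (hw : w ∈ polystrip n σ) :
    DifferentiableOn ℂ (fun z => g (Fin.cons z w)) {z | |z.im| < σ} :=
  hg.comp (by fun_prop) fun _ hz => finCons_mem_polystrip hz hw

theorem DifferentiableOn.comp_finCons_right {σ : ℝ} {g : (Fin (n + 1) → ℂ) → E}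
    (hg : DifferentiableOn ℂ g (polystrip (n + 1) σ)) {z : ℂ} (hz : |z.im| < σ) :
    DifferentiableOn ℂ (fun w => g (Fin.cons z w)) (polystrip n σ) :=
  hg.comp (by fun_prop) fun _ hw => finCons_mem_polystrip hz hw

omit [NormedSpace ℂ E] in
theorem continuous_comp_ofReal_add_mul_I {σ : ℝ} {g : (Fin n → ℂ) → E}
    (hg : ContinuousOn g (polystrip n σ)) {η : Fin n → ℝ} (hη : ∀ i, |η i| < σ) :
    Continuous fun θ : Fin n → ℝ => g fun i => θ i + η i * I :=
  hg.comp_continuous (by fun_prop) (mem_polystrip_ofReal_add_mul_I hη)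

theorem setIntegral_Icc_pi_comp_add_mul_I {σ : ℝ} {g : (Fin n → ℂ) → E}
    (hg : DifferentiableOn ℂ g (polystrip n σ)) (hper : IsTorusPeriodic g)
    {η : Fin n → ℝ} (hη : ∀ i, |η i| < σ) :
    ∫ θ in Set.Icc (fun _ => 0) (fun _ => 2 * Real.pi), g (fun i => θ i + η i * I) =
      ∫ θ in Set.Icc (fun _ => 0) (fun _ => 2 * Real.pi), g (fun i => θ i) := by
  induction n with
  | zero =>
    exact setIntegral_congr_fun measurableSet_Icc fun θ _ => congrArg g (Subsingleton.elim _ _)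
  | succ n ih =>
    obtain ⟨c, η', rfl⟩ : ∃ c η', η = Fin.cons c η' :=
      ⟨η 0, Fin.tail η, (Fin.cons_self_tail η).symm⟩
    have hc : |c| < σ := by simpa using hη 0
    have hη' : ∀ i, |η' i| < σ := fun i => by simpa using hη i.succ
    have hint : ∀ ζ : Fin (n + 1) → ℝ, (∀ i, |ζ i| < σ) →
        IntegrableOn (fun θ : Fin (n + 1) → ℝ => g fun i => θ i + ζ i * I)
          (Set.Icc (fun _ => 0) (fun _ => 2 * Real.pi)) := fun ζ hζ =>
      (continuous_comp_ofReal_add_mul_I hg.continuousOn hζ).integrableOn_Icc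
    have h0 : ∀ i, |(Fin.cons 0 η' : Fin (n + 1) → ℝ) i| < σ := by
      intro i; cases i using Fin.cases <;> simp [(abs_nonneg c).trans_lt hc, hη']
    -- Fubini isolates the first variable, which the one-dimensional shift moves to the real
    -- axis; the remaining ones are moved by the induction hypothesis.
    have hfirst : ∫ θ in Set.Icc (fun _ => 0) (fun _ => 2 * Real.pi),
          g (fun i => θ i + (Fin.cons c η' : Fin (n + 1) → ℝ) i * I) =
        ∫ θ in Set.Icc (fun _ => 0) (fun _ => 2 * Real.pi),
          g (fun i => θ i + (Fin.cons 0 η' : Fin (n + 1) → ℝ) i * I) := by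
      rw [setIntegral_Icc_pi_succ' (hint _ hη), setIntegral_Icc_pi_succ' (hint _ h0)]
      simp only [ofReal_finCons_add_mul_I]
      refine setIntegral_congr_fun measurableSet_Icc fun y hy => ?_
      simp only [integral_Icc_eq_integral_Ioc, ← intervalIntegral.integral_of_le Real.two_pi_pos.le,
        ofReal_zero, zero_mul, add_zero]
      exact intervalIntegral_comp_add_mul_I_of_periodic
        (hg.comp_finCons_left (mem_polystrip_ofReal_add_mul_I hη' y))
        (hper.finCons_add_two_pi · _) hc
    have hσ : 0 < σ := (abs_nonneg c).trans_lt hc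
    have hint0 : IntegrableOn (fun θ : Fin (n + 1) → ℝ => g fun i => (θ i : ℂ))
        (Set.Icc (fun _ => 0) (fun _ => 2 * Real.pi)) := by
      simpa using hint 0 (by simpa using hσ)
    rw [hfirst, setIntegral_Icc_pi_succ (hint _ h0), setIntegral_Icc_pi_succ hint0]
    simp only [ofReal_finCons_add_mul_I, ofReal_finCons, ofReal_zero, zero_mul, add_zero]
    refine setIntegral_congr_fun measurableSet_Icc fun x _ => ?_
    exact ih (hg.comp_finCons_right (by simpa using hσ)) (hper.comp_finCons _) hη'

end ContourShift

theorem IsTorusPeriodic.mul {g h : (Fin n → ℂ) → ℂ} (hg : IsTorusPeriodic g)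
    (hh : IsTorusPeriodic h) : IsTorusPeriodic (g * h) := fun z k => by
  simp only [Pi.mul_apply, hg z k, hh z k]

theorem isTorusPeriodic_exp_neg_I_mul_sum (k : Fin n → ℤ) :
    IsTorusPeriodic fun z : Fin n → ℂ => exp (-I * ∑ i, (k i : ℂ) * z i) := fun z m => by
  have hsum : ∑ i, (k i : ℂ) * (z i + 2 * Real.pi * (m i : ℂ)) =
      ∑ i, (k i : ℂ) * z i + (∑ i, k i * m i : ℤ) * (2 * Real.pi) := by
    push_cast
    rw [sum_mul, ← sum_add_distrib]
    exact sum_congr rfl fun i _ => by ring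
  have hlattice : -I * ((∑ i, k i * m i : ℤ) * (2 * Real.pi)) =
      ((-∑ i, k i * m i : ℤ) : ℂ) * (2 * Real.pi * I) := by
    push_cast
    ring
  show exp _ = exp _
  rw [hsum, mul_add, exp_add, hlattice, exp_int_mul_two_pi_mul_I, mul_one]

theorem norm_fourierCoeff'_le {ψ : (Fin n → ℂ) → ℂ} {σ s M : ℝ} (hs : 0 ≤ s) (hsσ : s < σ)
    (hd : DifferentiableOn ℂ ψ (polystrip n σ)) (hper : IsTorusPeriodic ψ)
    (hM : ∀ z ∈ polystrip n σ, ‖ψ z‖ ≤ M) (k : Fin n → ℤ) :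
    ‖fourierCoeff' n ψ k‖ ≤ M * Real.exp (-(s * ∑ i, |(k i : ℝ)|)) := by
  set g : (Fin n → ℂ) → ℂ := fun z => ψ z * exp (-I * ∑ i, (k i : ℂ) * z i)
  set η : Fin n → ℝ := fun i => -(s * (k i).sign)
  have hη : ∀ i, |η i| < σ := fun i => by
    refine lt_of_le_of_lt ?_ hsσ
    rcases lt_trichotomy (k i) 0 with h | h | h <;>
      simp [η, h, hs, abs_of_nonneg hs, Int.sign_eq_neg_one_of_neg, Int.sign_eq_one_of_pos]
  have hbound : ∀ θ : Fin n → ℝ,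
      ‖g fun i => θ i + η i * I‖ ≤ M * Real.exp (-(s * ∑ i, |(k i : ℝ)|)) := by
    intro θ
    have hkη : ∑ i, (k i : ℝ) * η i = -(s * ∑ i, |(k i : ℝ)|) := by
      simp only [η, mul_sum, ← sum_neg_distrib]
      refine sum_congr rfl fun i _ => ?_
      have hsign : ((k i).sign : ℝ) * k i = |(k i : ℝ)| := by
        exact_mod_cast Int.sign_mul_self_eq_abs (k i)
      linear_combination (-s) * hsign
    have hexp : ‖exp (-I * ∑ i, (k i : ℂ) * (θ i + η i * I))‖ =
        Real.exp (-(s * ∑ i, |(k i : ℝ)|)) := by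
      simp [Complex.norm_exp, Complex.re_sum, hkη]
    rw [norm_mul, hexp]
    exact mul_le_mul_of_nonneg_right (hM _ (mem_polystrip_ofReal_add_mul_I hη θ))
      (Real.exp_pos _).le
  have hcube : Set.univ.pi (fun _ : Fin n => Set.Icc (0 : ℝ) (2 * Real.pi)) =
      Set.Icc (fun _ => 0) (fun _ => 2 * Real.pi) := Set.pi_univ_Icc _ _
  have hvol : volume.real (Set.Icc (fun _ : Fin n => (0 : ℝ)) (fun _ => 2 * Real.pi)) =
      (2 * Real.pi) ^ n := by
    rw [measureReal_def, Real.volume_Icc_pi_toReal fun _ => Real.two_pi_pos.le]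
    simp
  have hintegral : fourierCoeff' n ψ k = ((2 * Real.pi) ^ n : ℝ)⁻¹ •
      ∫ θ in Set.Icc (fun _ => 0) (fun _ => 2 * Real.pi), g fun i => θ i + η i * I := by
    rw [setIntegral_Icc_pi_comp_add_mul_I (g := g) (hd.mul (by fun_prop))
      (hper.mul (isTorusPeriodic_exp_neg_I_mul_sum k)) hη, fourierCoeff', hcube]
  have hnorm := norm_setIntegral_le_of_norm_le_const (μ := volume) isCompact_Icc.measure_lt_top
    fun θ (_ : θ ∈ Set.Icc (fun _ => 0) (fun _ => 2 * Real.pi)) => hbound θ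
  rw [hvol] at hnorm
  rw [hintegral, norm_smul, Real.norm_of_nonneg (by positivity)]
  calc ((2 * Real.pi) ^ n)⁻¹ * ‖∫ θ in Set.Icc (fun _ => 0) (fun _ => 2 * Real.pi),
        g fun i => θ i + η i * I‖
      ≤ ((2 * Real.pi) ^ n)⁻¹ * (M * Real.exp (-(s * ∑ i, |(k i : ℝ)|)) * (2 * Real.pi) ^ n) := by
        gcongr
    _ = M * Real.exp (-(s * ∑ i, |(k i : ℝ)|)) := by field_simp

theorem hasSum_pow_natAbs {r : ℝ} (hr0 : 0 ≤ r) (hr1 : r < 1) :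
    HasSum (fun m : ℤ => r ^ m.natAbs) ((1 + r) / (1 - r)) := by
  have hgeom := hasSum_geometric_of_lt_one hr0 hr1
  have hneg : HasSum (fun k : ℕ => r ^ (-((k : ℤ) + 1)).natAbs) ((1 - r)⁻¹ * r) := by
    have habs : ∀ k : ℕ, (-((k : ℤ) + 1)).natAbs = k + 1 := fun k => by omega
    simpa only [habs, pow_succ] using hgeom.mul_right r
  convert HasSum.of_nat_of_neg_add_one (f := fun m : ℤ => r ^ m.natAbs) hgeom hneg using 1
  field_simp [(sub_pos.mpr hr1).ne']

theorem sum_exp_neg_mul_abs_le {δ : ℝ} (hδ : 0 < δ) (S : Finset ℤ) :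
    ∑ m ∈ S, Real.exp (-(δ * |(m : ℝ)|)) ≤ 1 + 2 / δ := by
  set r := Real.exp (-δ)
  have hr1 : r < 1 := Real.exp_lt_one_iff.mpr (neg_lt_zero.mpr hδ)
  have hterm : ∀ m : ℤ, Real.exp (-(δ * |(m : ℝ)|)) = r ^ m.natAbs := fun m => by
    rw [← Real.exp_nat_mul, Nat.cast_natAbs, Int.cast_abs]
    ring_nf
  simp_rw [hterm]
  refine (sum_le_hasSum S (fun m _ => by positivity)
    (hasSum_pow_natAbs (Real.exp_nonneg _) hr1)).trans ?_
  have hkey : r * (1 + δ) ≤ 1 := by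
    calc r * (1 + δ) ≤ r * Real.exp δ := by gcongr; linarith [Real.add_one_le_exp δ]
      _ = 1 := by rw [← Real.exp_add, neg_add_cancel, Real.exp_zero]
  have htail : 2 * r ≤ 2 / δ * (1 - r) := by
    rw [div_mul_eq_mul_div, le_div_iff₀ hδ]
    linarith
  rw [div_le_iff₀ (by linarith)]
  linarith

theorem sum_exp_neg_mul_sum_abs_le {δ : ℝ} (hδ : 0 < δ) (S : Finset (Fin n → ℤ)) :
    ∑ k ∈ S, Real.exp (-(δ * ∑ i, |(k i : ℝ)|)) ≤ (1 + 2 / δ) ^ n := by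
  set T : Finset ℤ := S.biUnion fun k => univ.image k
  have hST : S ⊆ Fintype.piFinset fun _ => T := fun k hk =>
    Fintype.mem_piFinset.mpr fun i => mem_biUnion.mpr ⟨k, hk, mem_image_of_mem k (mem_univ i)⟩
  calc ∑ k ∈ S, Real.exp (-(δ * ∑ i, |(k i : ℝ)|))
      ≤ ∑ k ∈ Fintype.piFinset fun _ => T, Real.exp (-(δ * ∑ i, |(k i : ℝ)|)) :=
        sum_le_sum_of_subset_of_nonneg hST fun _ _ _ => (Real.exp_pos _).le
    _ = ∏ _i : Fin n, ∑ m ∈ T, Real.exp (-(δ * |(m : ℝ)|)) := by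
        rw [prod_univ_sum]
        simp_rw [mul_sum, ← sum_neg_distrib, Real.exp_sum]
    _ ≤ (1 + 2 / δ) ^ n := by
        rw [prod_const, card_univ, Fintype.card_fin]
        exact pow_le_pow_left₀ (sum_nonneg fun _ _ => (Real.exp_pos _).le)
          (sum_exp_neg_mul_abs_le hδ T) n

theorem norm_exp_I_mul_sum_le {z : Fin n → ℂ} {t : ℝ} (hz : ∀ i, |(z i).im| ≤ t)
    (k : Fin n → ℤ) : ‖exp (I * ∑ i, (k i : ℂ) * z i)‖ ≤ Real.exp (t * ∑ i, |(k i : ℝ)|) := by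
  have hnorm : ‖exp (I * ∑ i, (k i : ℂ) * z i)‖ = Real.exp (-∑ i, k i * (z i).im) := by
    simp [Complex.norm_exp, Complex.re_sum]
  rw [hnorm, Real.exp_le_exp, mul_sum, ← sum_neg_distrib]
  refine sum_le_sum fun i _ => ?_
  calc -(k i * (z i).im) ≤ |(k i : ℝ)| * |(z i).im| := by rw [← abs_mul]; exact neg_le_abs _
    _ ≤ |(k i : ℝ)| * t := by gcongr; exact hz i
    _ = t * |(k i : ℝ)| := mul_comm _ _

/-- The `k`-th term of `φ`. -/
noncomputable def cohomologicalTerm (ψ : (Fin n → ℂ) → ℂ) (ω : Fin n → ℝ) (k : Fin n → ℤ)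
    (θ : Fin n → ℂ) : ℂ :=
  (-I * fourierCoeff' n ψ k / ((∑ i, (k i : ℝ) * ω i : ℝ) : ℂ)) * exp (I * ∑ i, (k i : ℂ) * θ i)

theorem norm_cohomologicalTerm_le {ψ : (Fin n → ℂ) → ℂ} {ω : Fin n → ℝ} {σ σ' κ M : ℝ}
    (hσ' : 0 ≤ σ') (hσ'σ : σ' < σ) (hd : DifferentiableOn ℂ ψ (polystrip n σ))
    (hper : IsTorusPeriodic ψ) (hM : ∀ z ∈ polystrip n σ, ‖ψ z‖ ≤ M) (hκ : 0 < κ)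
    {k : Fin n → ℤ} (hkω : κ ≤ |∑ i, (k i : ℝ) * ω i|) {θ : Fin n → ℂ}
    (hθ : ∀ i, |(θ i).im| ≤ σ') :
    ‖cohomologicalTerm ψ ω k θ‖ ≤ M / κ * Real.exp (-((σ - σ') / 2 * ∑ i, |(k i : ℝ)|)) := by
  have hcoeff := norm_fourierCoeff'_le (s := (σ + σ') / 2) (by linarith) (by linarith) hd hper hM k
  have hcoeff_nonneg := (norm_nonneg _).trans hcoeff
  calc ‖cohomologicalTerm ψ ω k θ‖
      = ‖fourierCoeff' n ψ k‖ / |∑ i, (k i : ℝ) * ω i| * ‖exp (I * ∑ i, (k i : ℂ) * θ i)‖ := by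
        rw [cohomologicalTerm, norm_mul, norm_div, norm_mul, norm_neg, norm_I, one_mul, norm_real,
          Real.norm_eq_abs]
    _ ≤ M * Real.exp (-((σ + σ') / 2 * ∑ i, |(k i : ℝ)|)) / κ *
          Real.exp (σ' * ∑ i, |(k i : ℝ)|) := by
        gcongr
        exact norm_exp_I_mul_sum_le hθ k
    _ = M / κ * Real.exp (-((σ - σ') / 2 * ∑ i, |(k i : ℝ)|)) := by
        rw [mul_div_right_comm, mul_assoc, ← Real.exp_add]
        ring_nf

theorem stmt_12_general (n : ℕ) :
    ∃ C > 0, ∀ (σ σ' κ : ℝ) (N : ℕ) (ω : Fin n → ℝ) (ψ : (Fin n → ℂ) → ℂ) (M : ℝ),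
      0 < σ' → σ' < σ → σ ≤ 1 → 0 < κ → 1 ≤ N →
      (∀ k : Fin n → ℤ, k ≠ 0 → ∑ i, |k i| ≤ (N : ℤ) →
        κ ≤ |∑ i, (k i : ℝ) * ω i|) →
      (∀ (θ : Fin n → ℂ) (k : Fin n → ℤ),
        ψ (fun i => θ i + 2 * Real.pi * (k i : ℂ)) = ψ θ) →
      DifferentiableOn ℂ ψ {θ : Fin n → ℂ | ∀ i, |(θ i).im| < σ} →
      (∀ θ : Fin n → ℂ, (∀ i, |(θ i).im| < σ) → ‖ψ θ‖ ≤ M) →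
      fourierCoeff' n ψ 0 = 0 →
      ∀ θ : Fin n → ℂ, (∀ i, |(θ i).im| < σ') →
        ‖∑ k ∈ (Finset.Icc (fun _ : Fin n => -(N : ℤ)) (fun _ : Fin n => (N : ℤ))).filter
              (fun k => 0 < ∑ i, |k i| ∧ ∑ i, |k i| ≤ (N : ℤ)),
            (-Complex.I * fourierCoeff' n ψ k / ((∑ i, (k i : ℝ) * ω i : ℝ) : ℂ)) *
              Complex.exp (Complex.I * ∑ i, (k i : ℂ) * θ i)‖
          ≤ C / (κ * (σ - σ') ^ n) * M := by
  refine ⟨6 ^ n, by positivity, fun σ σ' κ N ω ψ M hσ' hσ'σ hσ1 hκ _ hdio hper hd hM _ θ hθ => ?_⟩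
  have hδ : 0 < (σ - σ') / 2 := by linarith
  have hM0 : 0 ≤ M := (norm_nonneg _).trans (hM 0 fun i => by simpa using hσ'.trans hσ'σ)
  have h3δ : 1 + 2 / ((σ - σ') / 2) ≤ 3 / ((σ - σ') / 2) := by
    have h1 : 1 ≤ 1 / ((σ - σ') / 2) := (one_le_div hδ).mpr (by linarith)
    linarith [show 3 / ((σ - σ') / 2) = 1 / ((σ - σ') / 2) + 2 / ((σ - σ') / 2) by ring]
  calc _ ≤ _ := norm_sum_le _ _
    _ ≤ _ := sum_le_sum fun k hk => by
        obtain ⟨-, hk0, hkN⟩ := mem_filter.mp hk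
        exact norm_cohomologicalTerm_le hσ'.le hσ'σ hd hper hM hκ
          (hdio k (by rintro rfl; simp at hk0) hkN) fun i => (hθ i).le
    _ = M / κ * ∑ k ∈ _, Real.exp (-((σ - σ') / 2 * ∑ i, |(k i : ℝ)|)) := (mul_sum _ _ _).symm
    _ ≤ M / κ * (3 / ((σ - σ') / 2)) ^ n := by
        gcongr
        exact (sum_exp_neg_mul_sum_abs_le hδ _).trans (pow_le_pow_left₀ (by positivity) h3δ n)
    _ = 6 ^ n / (κ * (σ - σ') ^ n) * M := by
        field_simp
        ring

/-- Lemma 4.4 (first estimate): if `|k·ω| ≥ κ` for `0 < |k|₁ ≤ N` and `ψ` is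
`2π`-periodic, holomorphic and bounded by `M` on the strip `{|Im θ| < σ}` with zero
mean, then the truncated solution
`φ(θ) = ∑_{0<|k|₁≤N} (-i ψ̂(k)/(k·ω)) e^{ik·θ}` of `∇φ·ω = ψ + R` satisfies
`sup_{|Im θ|<σ'} |φ| ≤ C κ⁻¹ (σ-σ')⁻ⁿ sup_{|Im θ|<σ} |ψ|`, `C` depending only on `n`. -/
theorem stmt_12 (n : ℕ) (hn : 1 ≤ n) :
    ∃ C > 0, ∀ (σ σ' κ : ℝ) (N : ℕ) (ω : Fin n → ℝ) (ψ : (Fin n → ℂ) → ℂ) (M : ℝ),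
      0 < σ' → σ' < σ → σ ≤ 1 → 0 < κ → 1 ≤ N →
      (∀ k : Fin n → ℤ, k ≠ 0 → ∑ i, |k i| ≤ (N : ℤ) →
        κ ≤ |∑ i, (k i : ℝ) * ω i|) →
      (∀ (θ : Fin n → ℂ) (k : Fin n → ℤ),
        ψ (fun i => θ i + 2 * Real.pi * (k i : ℂ)) = ψ θ) →
      DifferentiableOn ℂ ψ {θ : Fin n → ℂ | ∀ i, |(θ i).im| < σ} →
      (∀ θ : Fin n → ℂ, (∀ i, |(θ i).im| < σ) → ‖ψ θ‖ ≤ M) →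
      fourierCoeff' n ψ 0 = 0 →
      ∀ θ : Fin n → ℂ, (∀ i, |(θ i).im| < σ') →
        ‖∑ k ∈ (Finset.Icc (fun _ : Fin n => -(N : ℤ)) (fun _ : Fin n => (N : ℤ))).filter
              (fun k => 0 < ∑ i, |k i| ∧ ∑ i, |k i| ≤ (N : ℤ)),
            (-Complex.I * fourierCoeff' n ψ k / ((∑ i, (k i : ℝ) * ω i : ℝ) : ℂ)) *
              Complex.exp (Complex.I * ∑ i, (k i : ℂ) * θ i)‖
          ≤ C / (κ * (σ - σ') ^ n) * M :=
  stmt_12_general n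
end

section
/- Let I = (−1,1), let A(t) = diag(a₁(t),…,a_N(t)) be a real diagonal N×N matrix with each a_j of class C¹ on I satisfying a_j'(t) ≥ δ for all t, and let B(t) be a Hermitian N×N matrix of class C¹ on I with ‖B'(t)‖ ≤ δ/2 in operator norm for all t. Then for every κ > 0, the Lebesgue measure of { t ∈ I : A(t)+B(t) is not invertible, or ‖(A(t)+B(t))^{-1}‖ > κ^{-1} } is at most 4 N κ / δ. -/
open MeasureTheory

/-- The `ℓ²` operator norm of a complex `N×N` matrix. -/
noncomputable def opN (N : ℕ) (M : Matrix (Fin N) (Fin N) ℂ) : ℝ :=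
  ‖(Matrix.toEuclideanCLM (𝕜 := ℂ) M :
      EuclideanSpace ℂ (Fin N) →L[ℂ] EuclideanSpace ℂ (Fin N))‖

open scoped InnerProductSpace
open RCLike Finset Matrix

/-!
Let `d(t)` be the number of eigenvalues `≤ -κ` of the Hermitian matrix `M(t) = A(t) + B(t)`.
Where `M(t)` is singular or `‖M(t)⁻¹‖ > κ⁻¹`, it has an eigenvalue in `(-κ, κ)`, so `d(t)` is
smaller than the number of eigenvalues `< κ`, which is at most `N`. Since `a_j' ≥ δ` and
`‖B'‖ ≤ δ/2`, the quadratic form `⟪x, M(t) x⟫` grows at rate at least `δ/2 · ‖x‖²`; by the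
min-max principle, for `t' ≥ t + 4κ/δ` the number of eigenvalues `< κ` of `M(t')` is then at
most `d(t)`. Hence `d` strictly decreases between such parameters `4κ/δ` apart, so each of its
at most `N` values is taken on a part of the set of diameter at most `4κ/δ`.
-/

theorem volume_le_of_fibers_separated {S : Set ℝ} {n : ℕ} {L : ℝ} (f : S → ℕ)
    (hf : ∀ t, f t < n) (hsep : ∀ t t' : S, (t : ℝ) + L ≤ t' → f t ≠ f t') :
    volume S ≤ ENNReal.ofReal (n * L) := by
  have hcover : S ⊆ ⋃ k ∈ range n, Subtype.val '' {t : S | f t = k} := fun t ht =>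
    Set.mem_biUnion (mem_range.mpr (hf ⟨t, ht⟩)) ⟨⟨t, ht⟩, rfl, rfl⟩
  have hfiber (k : ℕ) : volume (Subtype.val '' {t : S | f t = k}) ≤ ENNReal.ofReal L := by
    refine (Real.volume_le_diam _).trans (Metric.ediam_le_of_forall_dist_le ?_)
    rintro _ ⟨t, rfl : f t = k, rfl⟩ _ ⟨t', ht', rfl⟩
    rw [Real.dist_eq, abs_le]
    constructor <;> by_contra! h
    · exact hsep t t' (by linarith) ht'.symm
    · exact hsep t' t (by linarith) ht'
  calc volume S ≤ ∑ k ∈ range n, volume (Subtype.val '' {t : S | f t = k}) :=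
        (measure_mono hcover).trans (measure_biUnion_finset_le _ _)
    _ ≤ ∑ _k ∈ range n, ENNReal.ofReal L := sum_le_sum fun k _ => hfiber k
    _ = ENNReal.ofReal (n * L) := by
        rw [sum_const, card_range, nsmul_eq_mul, ENNReal.ofReal_mul n.cast_nonneg,
          ENNReal.ofReal_natCast]

namespace LinearMap.IsSymmetric

variable {𝕜 E : Type*} [RCLike 𝕜] [NormedAddCommGroup E] [InnerProductSpace 𝕜 E]
  [FiniteDimensional 𝕜 E] {T T' : E →ₗ[𝕜] E} {n : ℕ}

theorem re_inner_apply_self_eq_sum (hT : T.IsSymmetric) (hn : Module.finrank 𝕜 E = n) (v : E) :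
    re ⟪v, T v⟫_𝕜 =
      ∑ i, hT.eigenvalues hn i * ‖(hT.eigenvectorBasis hn).repr v i‖ ^ 2 := by
  set b := hT.eigenvectorBasis hn
  rw [← b.repr.inner_map_map, PiLp.inner_apply, map_sum]
  refine sum_congr rfl fun i _ => ?_
  rw [hT.eigenvectorBasis_apply_self_apply, inner_apply, mul_assoc, mul_conj, ← ofReal_pow,
    ← ofReal_mul, ofReal_re]

theorem norm_apply_sq_eq_sum (hT : T.IsSymmetric) (hn : Module.finrank 𝕜 E = n) (v : E) :
    ‖T v‖ ^ 2 = ∑ i, hT.eigenvalues hn i ^ 2 * ‖(hT.eigenvectorBasis hn).repr v i‖ ^ 2 := by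
  rw [← (hT.eigenvectorBasis hn).sum_sq_norm_inner_right]
  refine sum_congr rfl fun i _ => ?_
  rw [← OrthonormalBasis.repr_apply_apply, hT.eigenvectorBasis_apply_self_apply, norm_mul,
    norm_ofReal, mul_pow, sq_abs]

theorem norm_sq_eq_sum (hT : T.IsSymmetric) (hn : Module.finrank 𝕜 E = n) (v : E) :
    ‖v‖ ^ 2 = ∑ i, ‖(hT.eigenvectorBasis hn).repr v i‖ ^ 2 := by
  simp only [OrthonormalBasis.repr_apply_apply, OrthonormalBasis.sum_sq_norm_inner_right]

theorem finrank_le_card_eigenvalues_le (hT : T.IsSymmetric) (hn : Module.finrank 𝕜 E = n)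
    {s : ℝ} (V : Submodule 𝕜 E) (hV : ∀ v ∈ V, re ⟪v, T v⟫_𝕜 ≤ s * ‖v‖ ^ 2) :
    Module.finrank 𝕜 V ≤ #{i | hT.eigenvalues hn i ≤ s} := by
  set b := hT.eigenvectorBasis hn
  -- A vector of `V` orthogonal to the eigenvectors with eigenvalue `≤ s` has to vanish.
  let P : V →ₗ[𝕜] {i // hT.eigenvalues hn i ≤ s} → 𝕜 :=
    LinearMap.pi fun i => (innerₛₗ 𝕜 (b i)).comp V.subtype
  have hP : Function.Injective P := by
    rw [← LinearMap.ker_eq_bot, LinearMap.ker_eq_bot']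
    rintro ⟨v, hv⟩ hPv
    have hzero (i) (hi : hT.eigenvalues hn i ≤ s) : b.repr v i = 0 := by
      simpa [P, b.repr_apply_apply] using congrFun hPv ⟨i, hi⟩
    have hterm (i) : 0 ≤ (hT.eigenvalues hn i - s) * ‖b.repr v i‖ ^ 2 := by
      rcases le_or_gt (hT.eigenvalues hn i) s with hi | hi
      · simp [hzero i hi]
      · positivity
    have hsum : ∑ i, (hT.eigenvalues hn i - s) * ‖b.repr v i‖ ^ 2 = 0 := by
      refine le_antisymm ?_ (sum_nonneg fun i _ => hterm i)
      have := hV v hv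
      rw [hT.re_inner_apply_self_eq_sum hn, hT.norm_sq_eq_sum hn, mul_sum] at this
      simpa [sub_mul] using this
    suffices b.repr v = 0 by simpa using this
    ext i
    rcases le_or_gt (hT.eigenvalues hn i) s with hi | hi
    · exact hzero i hi
    · simpa [(sub_pos.mpr hi).ne'] using
        (sum_eq_zero_iff_of_nonneg fun i _ => hterm i).mp hsum i (mem_univ i)
  simpa [Fintype.card_subtype] using LinearMap.finrank_le_finrank_of_injective hP

theorem exists_finrank_eq_card_eigenvalues_lt (hT : T.IsSymmetric) (hn : Module.finrank 𝕜 E = n)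
    (s : ℝ) : ∃ V : Submodule 𝕜 E, Module.finrank 𝕜 V = #{i | hT.eigenvalues hn i < s} ∧
      ∀ v ∈ V, re ⟪v, T v⟫_𝕜 ≤ s * ‖v‖ ^ 2 := by
  let e (i : {i // hT.eigenvalues hn i < s}) : E := hT.eigenvectorBasis hn i
  have he : LinearIndependent 𝕜 e :=
    (hT.eigenvectorBasis hn).orthonormal.linearIndependent.comp _ Subtype.val_injective
  refine ⟨Submodule.span 𝕜 (Set.range e), ?_, fun v hv => ?_⟩
  · rw [finrank_span_eq_card he, Fintype.card_subtype]
  have hzero (i) (hi : s ≤ hT.eigenvalues hn i) : (hT.eigenvectorBasis hn).repr v i = 0 := by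
    rw [OrthonormalBasis.repr_apply_apply, ← Submodule.mem_orthogonal_singleton_iff_inner_right]
    refine Submodule.span_le.mpr ?_ hv
    rintro _ ⟨j, rfl⟩
    rw [SetLike.mem_coe, Submodule.mem_orthogonal_singleton_iff_inner_right]
    exact (hT.eigenvectorBasis hn).orthonormal.inner_eq_zero fun h => (h ▸ j.2).not_ge hi
  rw [hT.re_inner_apply_self_eq_sum hn, hT.norm_sq_eq_sum hn, mul_sum]
  refine sum_le_sum fun i _ => ?_
  rcases lt_or_ge (hT.eigenvalues hn i) s with hi | hi
  · exact mul_le_mul_of_nonneg_right hi.le (by positivity)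
  · simp [hzero i hi]

theorem card_eigenvalues_lt_le_of_le_add (hT : T.IsSymmetric) (hT' : T'.IsSymmetric)
    (hn : Module.finrank 𝕜 E = n) {c : ℝ}
    (h : ∀ v, re ⟪v, T v⟫_𝕜 + c * ‖v‖ ^ 2 ≤ re ⟪v, T' v⟫_𝕜) {r s : ℝ} (hrs : s ≤ r + c) :
    #{i | hT'.eigenvalues hn i < s} ≤ #{i | hT.eigenvalues hn i ≤ r} := by
  obtain ⟨V, hVdim, hV⟩ := hT'.exists_finrank_eq_card_eigenvalues_lt hn s
  rw [← hVdim]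
  refine hT.finrank_le_card_eigenvalues_le hn V fun v hv => ?_
  nlinarith [h v, hV v hv, sq_nonneg ‖v‖]

theorem exists_abs_eigenvalues_lt (hT : T.IsSymmetric) (hn : Module.finrank 𝕜 E = n)
    {κ : ℝ} {v : E} (hv : ‖T v‖ < κ * ‖v‖) : ∃ i, |hT.eigenvalues hn i| < κ := by
  by_contra! h
  have hκ : 0 < κ := by
    by_contra! hκ
    nlinarith [norm_nonneg (T v), norm_nonneg v]
  have : (κ * ‖v‖) ^ 2 ≤ ‖T v‖ ^ 2 := by
    rw [hT.norm_apply_sq_eq_sum hn, mul_pow, hT.norm_sq_eq_sum hn, mul_sum]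
    refine sum_le_sum fun i _ => mul_le_mul_of_nonneg_right ?_ (by positivity)
    simpa [sq_abs] using pow_le_pow_left₀ hκ.le (h i) 2
  nlinarith [norm_nonneg (T v), norm_nonneg v]

theorem card_eigenvalues_le_neg_lt_card_eigenvalues_lt (hT : T.IsSymmetric)
    (hn : Module.finrank 𝕜 E = n) {κ : ℝ} {v : E} (hv : ‖T v‖ < κ * ‖v‖) :
    #{i | hT.eigenvalues hn i ≤ -κ} < #{i | hT.eigenvalues hn i < κ} := by
  obtain ⟨i, hi⟩ := hT.exists_abs_eigenvalues_lt hn hv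
  rw [abs_lt] at hi
  refine card_lt_card (ssubset_iff_of_subset ?_ |>.mpr ⟨i, ?_⟩)
  · intro j
    simp only [mem_filter, mem_univ, true_and]
    intro hj
    linarith [hi.1.trans hi.2]
  · simp [hi.2, hi.1]

end LinearMap.IsSymmetric

namespace Matrix

variable {𝕜 ι : Type*} [RCLike 𝕜] [Fintype ι] [DecidableEq ι]

theorem inner_toEuclideanCLM_self (A : Matrix ι ι 𝕜) (x : EuclideanSpace 𝕜 ι) :
    ⟪x, toEuclideanCLM (𝕜 := 𝕜) A x⟫_𝕜 = ∑ i, ∑ j, A i j * x j * star (x i) := by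
  simp [EuclideanSpace.inner_eq_star_dotProduct, dotProduct, mulVec, sum_mul]

theorem re_inner_toEuclideanCLM_diagonal (a : ι → ℝ) (x : EuclideanSpace ℂ ι) :
    re ⟪x, toEuclideanCLM (𝕜 := ℂ) (diagonal fun i => (a i : ℂ)) x⟫_ℂ =
      ∑ i, a i * ‖x i‖ ^ 2 := by
  simp only [inner_toEuclideanCLM_self, diagonal_apply, ite_mul, zero_mul, sum_ite_eq,
    mem_univ, if_true, map_sum]
  refine sum_congr rfl fun i _ => ?_
  rw [mul_assoc, Complex.star_def, Complex.mul_conj', ← Complex.ofReal_pow,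
    ← Complex.ofReal_mul]
  exact Complex.ofReal_re _

theorem hasDerivAt_re_inner_toEuclideanCLM_self {A : ℝ → Matrix ι ι 𝕜} {A' : Matrix ι ι 𝕜}
    {t : ℝ} (hA : ∀ i j, HasDerivAt (fun s => A s i j) (A' i j) t) (x : EuclideanSpace 𝕜 ι) :
    HasDerivAt (fun s => re ⟪x, toEuclideanCLM (𝕜 := 𝕜) (A s) x⟫_𝕜)
      (re ⟪x, toEuclideanCLM (𝕜 := 𝕜) A' x⟫_𝕜) t := by
  simp only [inner_toEuclideanCLM_self]
  have := HasDerivAt.fun_sum (u := univ) fun i _ => HasDerivAt.fun_sum (u := univ) fun j _ =>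
    ((hA i j).mul_const (x j)).mul_const (star (x i))
  exact reCLM.hasFDerivAt.comp_hasDerivAt t this

end Matrix

theorem isUnit_and_opN_inv_le {N : ℕ} {M : Matrix (Fin N) (Fin N) ℂ} {κ : ℝ} (hκ : 0 < κ)
    (h : ∀ x, κ * ‖x‖ ≤ ‖toEuclideanCLM (𝕜 := ℂ) M x‖) : IsUnit M ∧ opN N M⁻¹ ≤ κ⁻¹ := by
  have hM : IsUnit M := by
    rw [← mulVec_injective_iff_isUnit, ← coe_mulVecLin, injective_iff_map_eq_zero]
    intro z hz
    have := h (WithLp.toLp 2 z)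
    rw [toEuclideanCLM_toLp, ← mulVecLin_apply, hz, WithLp.toLp_zero, norm_zero] at this
    simpa using le_antisymm (nonpos_of_mul_nonpos_right this hκ) (norm_nonneg _)
  refine ⟨hM, ContinuousLinearMap.opNorm_le_bound _ (by positivity) fun y => ?_⟩
  have := h (toEuclideanCLM (𝕜 := ℂ) M⁻¹ y)
  rw [← mul_apply_eq_comp, ← map_mul, mul_nonsing_inv _ ((isUnit_iff_isUnit_det M).mp hM),
    map_one, one_apply_eq_self] at this
  rw [inv_mul_eq_div, le_div_iff₀ hκ]
  linarith

theorem exists_norm_toEuclideanCLM_lt {N : ℕ} {M : Matrix (Fin N) (Fin N) ℂ} {κ : ℝ}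
    (hκ : 0 < κ) (h : ¬ IsUnit M ∨ κ⁻¹ < opN N M⁻¹) :
    ∃ x, ‖toEuclideanCLM (𝕜 := ℂ) M x‖ < κ * ‖x‖ := by
  by_contra! hM
  obtain ⟨hunit, hinv⟩ := isUnit_and_opN_inv_le hκ hM
  exact h.elim (· hunit) hinv.not_gt

theorem isHermitian_diagonal_ofReal_add {ι : Type*} [Fintype ι] [DecidableEq ι] (a : ι → ℝ)
    {B : Matrix ι ι ℂ} (hB : B.IsHermitian) : (diagonal (fun j => (a j : ℂ)) + B).IsHermitian :=
  (isHermitian_diagonal_of_self_adjoint _ (funext fun j => Complex.conj_ofReal (a j))).add hB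

theorem le_re_inner_diagonal_add {N : ℕ} (a : Fin N → ℝ) (B : Matrix (Fin N) (Fin N) ℂ)
    {δ β : ℝ} (ha : ∀ i, δ ≤ a i) (hB : opN N B ≤ β) (x : EuclideanSpace ℂ (Fin N)) :
    (δ - β) * ‖x‖ ^ 2 ≤
      re ⟪x, toEuclideanCLM (𝕜 := ℂ) (diagonal (fun j => (a j : ℂ)) + B) x⟫_ℂ := by
  have hdiag : δ * ‖x‖ ^ 2 ≤ ∑ i, a i * ‖x i‖ ^ 2 := by
    rw [EuclideanSpace.norm_sq_eq, mul_sum]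
    exact sum_le_sum fun i _ => mul_le_mul_of_nonneg_right (ha i) (by positivity)
  have hB : |re ⟪x, toEuclideanCLM (𝕜 := ℂ) B x⟫_ℂ| ≤ β * ‖x‖ ^ 2 :=
    calc |re ⟪x, toEuclideanCLM (𝕜 := ℂ) B x⟫_ℂ| ≤ ‖x‖ * ‖toEuclideanCLM (𝕜 := ℂ) B x‖ :=
          (abs_re_le_norm _).trans (norm_inner_le_norm _ _)
      _ ≤ ‖x‖ * (opN N B * ‖x‖) := by gcongr; exact ContinuousLinearMap.le_opNorm _ _
      _ ≤ β * ‖x‖ ^ 2 := by nlinarith [norm_nonneg x, sq_nonneg ‖x‖]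
  rw [map_add, _root_.add_apply, inner_add_right, map_add, re_inner_toEuclideanCLM_diagonal]
  linarith [neg_abs_le (re ⟪x, toEuclideanCLM (𝕜 := ℂ) B x⟫_ℂ)]

theorem mul_sub_le_re_inner_diagonal_add_sub {N : ℕ} {D : Set ℝ} (hD : Convex ℝ D)
    (hDo : IsOpen D) {δ β : ℝ} {a a' : Fin N → ℝ → ℝ} {B B' : ℝ → Matrix (Fin N) (Fin N) ℂ}
    (ha : ∀ j, ∀ t ∈ D, HasDerivAt (a j) (a' j t) t) (ha' : ∀ j, ∀ t ∈ D, δ ≤ a' j t)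
    (hB : ∀ i j, ∀ t ∈ D, HasDerivAt (fun u => B u i j) (B' t i j) t)
    (hB' : ∀ t ∈ D, opN N (B' t) ≤ β) {t t' : ℝ} (ht : t ∈ D) (ht' : t' ∈ D) (htt' : t ≤ t')
    (x : EuclideanSpace ℂ (Fin N)) :
    (δ - β) * ‖x‖ ^ 2 * (t' - t) ≤
      re ⟪x, toEuclideanCLM (𝕜 := ℂ) (diagonal (fun j => (a j t' : ℂ)) + B t') x⟫_ℂ -
        re ⟪x, toEuclideanCLM (𝕜 := ℂ) (diagonal (fun j => (a j t : ℂ)) + B t) x⟫_ℂ := by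
  have hq (s) (hs : s ∈ D) : HasDerivAt
      (fun s => re ⟪x, toEuclideanCLM (𝕜 := ℂ) (diagonal (fun j => (a j s : ℂ)) + B s) x⟫_ℂ)
      (re ⟪x, toEuclideanCLM (𝕜 := ℂ) (diagonal (fun j => (a' j s : ℂ)) + B' s) x⟫_ℂ) s := by
    refine hasDerivAt_re_inner_toEuclideanCLM_self (fun i j => ?_) x
    simp only [Matrix.add_apply, diagonal_apply]
    split_ifs with hij
    · subst hij
      exact (ha i s hs).ofReal_comp.add (hB i i s hs)
    · simpa using hB i j s hs
  refine hD.mul_sub_le_image_sub_of_le_deriv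
    (fun s hs => (hq s hs).continuousAt.continuousWithinAt)
    (fun s hs => (hq s (interior_subset hs)).differentiableAt.differentiableWithinAt)
    (fun s hs => ?_) t ht t' ht' htt'
  rw [hDo.interior_eq] at hs
  rw [(hq s hs).deriv]
  exact le_re_inner_diagonal_add _ _ (fun j => ha' j s hs) (hB' s hs) x

theorem stmt_14_general (N : ℕ) (δ κ : ℝ) (hδ : 0 < δ) (hκ : 0 < κ)
    (a : Fin N → ℝ → ℝ) (a' : Fin N → ℝ → ℝ)
    (ha : ∀ j, ∀ t ∈ Set.Ioo (-1 : ℝ) 1, HasDerivAt (a j) (a' j t) t)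
    (ha'δ : ∀ j, ∀ t ∈ Set.Ioo (-1 : ℝ) 1, δ ≤ a' j t)
    (B : ℝ → Matrix (Fin N) (Fin N) ℂ) (B' : ℝ → Matrix (Fin N) (Fin N) ℂ)
    (hBherm : ∀ t ∈ Set.Ioo (-1 : ℝ) 1, (B t).IsHermitian)
    (hB : ∀ i j, ∀ t ∈ Set.Ioo (-1 : ℝ) 1, HasDerivAt (fun u => B u i j) (B' t i j) t)
    (hB'δ : ∀ t ∈ Set.Ioo (-1 : ℝ) 1, opN N (B' t) ≤ δ / 2) :
    volume {t ∈ Set.Ioo (-1 : ℝ) 1 |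
        ¬ IsUnit (Matrix.diagonal (fun j => (a j t : ℂ)) + B t) ∨
        κ⁻¹ < opN N (Matrix.diagonal (fun j => (a j t : ℂ)) + B t)⁻¹}
      ≤ ENNReal.ofReal (4 * N * κ / δ) := by
  set M : ℝ → Matrix (Fin N) (Fin N) ℂ := fun t => diagonal (fun j => (a j t : ℂ)) + B t
  set S := {t ∈ Set.Ioo (-1 : ℝ) 1 | ¬ IsUnit (M t) ∨ κ⁻¹ < opN N (M t)⁻¹}
  have hsymm (t : S) : (toEuclideanLin (M t)).IsSymmetric :=
    isSymmetric_toEuclideanLin_iff.mpr <| isHermitian_diagonal_ofReal_add _ (hBherm t t.2.1)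
  let below (t : S) : ℕ := #{i | (hsymm t).eigenvalues finrank_euclideanSpace_fin i ≤ -κ}
  have hbelow (t : S) :
      below t < #{i | (hsymm t).eigenvalues finrank_euclideanSpace_fin i < κ} := by
    obtain ⟨x, hx⟩ := exists_norm_toEuclideanCLM_lt hκ t.2.2
    exact (hsymm t).card_eigenvalues_le_neg_lt_card_eigenvalues_lt _ hx
  have hdrop (t t' : S) (htt' : t + 4 * κ / δ ≤ t') :
      #{i | (hsymm t').eigenvalues finrank_euclideanSpace_fin i < κ} ≤ below t := by
    have htt : (t : ℝ) ≤ t' := by linarith [div_pos (mul_pos four_pos hκ) hδ]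
    refine (hsymm t).card_eigenvalues_lt_le_of_le_add (hsymm t') _ (c := δ / 2 * (t' - t))
      (fun x => ?_) ?_
    · have := mul_sub_le_re_inner_diagonal_add_sub (convex_Ioo _ _) isOpen_Ioo ha ha'δ hB hB'δ
        t.2.1 t'.2.1 htt x
      change re ⟪x, toEuclideanCLM (𝕜 := ℂ) (M t) x⟫_ℂ + _ ≤
        re ⟪x, toEuclideanCLM (𝕜 := ℂ) (M t') x⟫_ℂ
      linarith
    · have : δ / 2 * (4 * κ / δ) = 2 * κ := by field_simp; ring
      nlinarith
  refine (volume_le_of_fibers_separated (n := N) (L := 4 * κ / δ) below (fun t => ?_)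
    fun t t' htt' => ?_).trans_eq ?_
  · exact (hbelow t).trans_le (card_le_univ _ |>.trans_eq (Fintype.card_fin N))
  · exact ((hbelow t').trans_le (hdrop t t' htt')).ne'
  · congr 1
    field_simp

/-- Lemma 4.5 (Eliasson–Kuksin): if `A(t) = diag(a_j(t))` with `a_j` of class `C¹`
on `I = (-1,1)` and `a_j'(t) ≥ δ`, and `B(t)` is Hermitian of class `C¹` with
`‖B'(t)‖ ≤ δ/2`, then for every `κ > 0`,
`mes { t ∈ I : ‖(A(t)+B(t))⁻¹‖ > κ⁻¹ (or not invertible) } ≤ 4 N κ / δ`. -/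
theorem stmt_14 (N : ℕ) (δ κ : ℝ) (hδ : 0 < δ) (hκ : 0 < κ)
    (a : Fin N → ℝ → ℝ) (a' : Fin N → ℝ → ℝ)
    (ha : ∀ j, ∀ t ∈ Set.Ioo (-1 : ℝ) 1, HasDerivAt (a j) (a' j t) t)
    (ha'c : ∀ j, ContinuousOn (a' j) (Set.Ioo (-1 : ℝ) 1))
    (ha'δ : ∀ j, ∀ t ∈ Set.Ioo (-1 : ℝ) 1, δ ≤ a' j t)
    (B : ℝ → Matrix (Fin N) (Fin N) ℂ) (B' : ℝ → Matrix (Fin N) (Fin N) ℂ)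
    (hBherm : ∀ t ∈ Set.Ioo (-1 : ℝ) 1, (B t).IsHermitian)
    (hB : ∀ i j, ∀ t ∈ Set.Ioo (-1 : ℝ) 1, HasDerivAt (fun u => B u i j) (B' t i j) t)
    (hB'c : ∀ i j, ContinuousOn (fun t => B' t i j) (Set.Ioo (-1 : ℝ) 1))
    (hB'δ : ∀ t ∈ Set.Ioo (-1 : ℝ) 1, opN N (B' t) ≤ δ / 2) :
    volume {t ∈ Set.Ioo (-1 : ℝ) 1 |
        ¬ IsUnit (Matrix.diagonal (fun j => (a j t : ℂ)) + B t) ∨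
        κ⁻¹ < opN N (Matrix.diagonal (fun j => (a j t : ℂ)) + B t)⁻¹}
      ≤ ENNReal.ofReal (4 * N * κ / δ) :=
  stmt_14_general N δ κ hδ hκ a a' ha ha'δ B B' hBherm hB hB'δ
end
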